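/- For every s ∈ (0,1) and every τ ∈ (0, 2s), the integral ∫_ℝ (2 − (1+t)₊^τ − (1−t)₊^τ)/|t|^{1+2s} dt is absolutely convergent, i.e. the function t ↦ (2 − (1+t)₊^τ − (1−t)₊^τ)/|t|^{1+2s} is integrable on ℝ. -/

import Mathlib

/-!
Write `N(t) = 2 - (1+t)₊^τ - (1-t)₊^τ`; it is even, so it suffices to integrate over `t > 0`.
For `0 < t ≤ 1/2` the mean value theorem, applied to `u ↦ (1+u)^τ + (1-u)^τ` and then to the
derivative `x ↦ τ x^(τ-1)` (Lipschitz on `[1/2, 3/2]`), gives `|N(t)| ≤ C t²`, so the integrand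
is `O(t^(1-2s))` with `1 - 2s > -1`. For `t ≥ 1/2` one has `|N(t)| ≤ 2 (3t)^τ`, so the integrand
is `O(t^(τ-1-2s))` with `τ - 1 - 2s < -1`.
-/

open MeasureTheory Set Real

lemma integrable_of_even_of_integrableOn_Ioi {E : Type*} [NormedAddCommGroup E] {f : ℝ → E}
    (heven : ∀ x, f (-x) = f x) (hf : IntegrableOn f (Ioi 0)) : Integrable f := by
  have hIci : IntegrableOn f (Ici 0) := (integrableOn_Ici_iff_integrableOn_Ioi).mpr hf
  have hIic : IntegrableOn f (Iic 0) := by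
    have := ((Measure.measurePreserving_neg volume).integrableOn_comp_preimage
      measurableEmbedding_neg).mpr hIci
    rwa [show f ∘ Neg.neg = f from funext heven, show Neg.neg ⁻¹' Ici (0 : ℝ) = Iic 0 by
      ext; simp] at this
  rw [← integrableOn_univ, ← Iic_union_Ici (a := (0 : ℝ))]
  exact hIic.union hIci

lemma abs_rpow_sub_rpow_le_of_le_one {p a x y : ℝ} (ha : 0 < a) (hp : p ≤ 1)
    (hx : a ≤ x) (hy : a ≤ y) : |x ^ p - y ^ p| ≤ |p| * a ^ (p - 1) * |x - y| := by
  have hderiv : ∀ u ∈ Ici a,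
      HasDerivWithinAt (fun u : ℝ => u ^ p) (p * u ^ (p - 1)) (Ici a) u :=
    fun u hu => (hasDerivAt_rpow_const (Or.inl (ha.trans_le hu).ne')).hasDerivWithinAt
  have hbound : ∀ u ∈ Ici a, ‖p * u ^ (p - 1)‖ ≤ |p| * a ^ (p - 1) := by
    intro u hu
    rw [norm_mul, norm_eq_abs, norm_eq_abs, abs_of_pos (rpow_pos_of_pos (ha.trans_le hu) _)]
    exact mul_le_mul_of_nonneg_left (rpow_le_rpow_of_nonpos ha hu (by linarith)) (abs_nonneg p)
  simpa only [norm_eq_abs] using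
    (convex_Ici a).norm_image_sub_le_of_norm_hasDerivWithin_le hderiv hbound hy hx

lemma abs_add_add_sub_two_mul_le {f f' : ℝ → ℝ} {x t L : ℝ} (ht : 0 ≤ t) (hL : 0 ≤ L)
    (hf : ∀ u ∈ Icc (x - t) (x + t), HasDerivAt f (f' u) u)
    (hf' : ∀ u ∈ Icc (x - t) (x + t), ∀ v ∈ Icc (x - t) (x + t), |f' u - f' v| ≤ L * |u - v|) :
    |f (x + t) + f (x - t) - 2 * f x| ≤ 2 * L * t ^ 2 := by
  have hmem : ∀ u ∈ Icc 0 t, x + u ∈ Icc (x - t) (x + t) ∧ x - u ∈ Icc (x - t) (x + t) :=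
    fun u hu => ⟨⟨by linarith [hu.1], by linarith [hu.2]⟩, ⟨by linarith [hu.2], by linarith [hu.1]⟩⟩
  have hderiv : ∀ u ∈ Icc 0 t, HasDerivWithinAt (fun u => f (x + u) + f (x - u))
      (f' (x + u) - f' (x - u)) (Icc 0 t) u := by
    intro u hu
    have hplus := (hf _ (hmem u hu).1).comp u ((hasDerivAt_id u).const_add x)
    have hminus := (hf _ (hmem u hu).2).comp u ((hasDerivAt_id u).const_sub x)
    simpa [Function.comp_def, sub_eq_add_neg] using (hplus.fun_add hminus).hasDerivWithinAt
  have hbound : ∀ u ∈ Icc 0 t, ‖f' (x + u) - f' (x - u)‖ ≤ 2 * L * t := by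
    intro u hu
    calc ‖f' (x + u) - f' (x - u)‖ ≤ L * |(x + u) - (x - u)| := hf' _ (hmem u hu).1 _ (hmem u hu).2
      _ = 2 * L * u := by
        rw [add_sub_sub_cancel, ← two_mul, abs_of_nonneg (by linarith [hu.1])]
        ring
      _ ≤ 2 * L * t := by gcongr; exact hu.2
  have hmvt := (convex_Icc 0 t).norm_image_sub_le_of_norm_hasDerivWithin_le hderiv hbound
    (left_mem_Icc.mpr ht) (right_mem_Icc.mpr ht)
  simp only [add_zero, sub_zero, norm_eq_abs, abs_of_nonneg ht] at hmvt
  rwa [two_mul (f x), sq, ← mul_assoc]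

lemma abs_one_add_rpow_add_one_sub_rpow_sub_two_le {τ t : ℝ} (hτ : τ ≤ 2) (ht₀ : 0 ≤ t)
    (ht : t ≤ 1 / 2) :
    |(1 + t) ^ τ + (1 - t) ^ τ - 2| ≤ 2 * (|τ| * (|τ - 1| * (1 / 2) ^ (τ - 2))) * t ^ 2 := by
  have key := abs_add_add_sub_two_mul_le (f := fun u => u ^ τ) (f' := fun u => τ * u ^ (τ - 1))
    (x := 1) (L := |τ| * (|τ - 1| * (1 / 2) ^ (τ - 2))) ht₀ (by positivity)
    (fun u hu => hasDerivAt_rpow_const (Or.inl (by linarith [hu.1])))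
    (fun u hu v hv => by
      rw [← mul_sub, abs_mul, mul_assoc]
      refine mul_le_mul_of_nonneg_left ?_ (abs_nonneg τ)
      simpa only [sub_sub, show (1 : ℝ) + 1 = 2 by norm_num] using
        abs_rpow_sub_rpow_le_of_le_one (p := τ - 1) (a := 1 / 2) (by norm_num) (by linarith)
          (by linarith [hu.1]) (by linarith [hv.1]))
  simpa only [one_rpow, mul_one] using key

noncomputable def posPowSecondDiff (τ t : ℝ) : ℝ := 2 - (max (1 + t) 0) ^ τ - (max (1 - t) 0) ^ τ

lemma posPowSecondDiff_neg (τ t : ℝ) : posPowSecondDiff τ (-t) = posPowSecondDiff τ t := by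
  simp only [posPowSecondDiff, sub_neg_eq_add, ← sub_eq_add_neg]
  ring

lemma measurable_posPowSecondDiff (τ : ℝ) : Measurable (posPowSecondDiff τ) := by
  unfold posPowSecondDiff
  fun_prop

lemma abs_posPowSecondDiff_le_of_le_half {τ t : ℝ} (hτ : τ ≤ 2) (ht₀ : 0 ≤ t) (ht : t ≤ 1 / 2) :
    |posPowSecondDiff τ t| ≤ 2 * (|τ| * (|τ - 1| * (1 / 2) ^ (τ - 2))) * t ^ 2 := by
  rw [posPowSecondDiff, max_eq_left (by linarith), max_eq_left (by linarith),
    show ∀ a b : ℝ, 2 - a - b = -(a + b - 2) by intros; ring, abs_neg]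
  exact abs_one_add_rpow_add_one_sub_rpow_sub_two_le hτ ht₀ ht

lemma abs_posPowSecondDiff_le_of_half_le {τ t : ℝ} (hτ : 0 ≤ τ) (ht : 1 / 2 ≤ t) :
    |posPowSecondDiff τ t| ≤ 2 * (3 * t) ^ τ := by
  have hplus : (max (1 + t) 0) ^ τ ≤ (3 * t) ^ τ := by
    rw [max_eq_left (by linarith)]
    exact rpow_le_rpow (by linarith) (by linarith) hτ
  have hminus : (max (1 - t) 0) ^ τ ≤ 1 :=
    rpow_le_one (le_max_right _ _) (max_le (by linarith) zero_le_one) hτ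
  have hone : 1 ≤ (3 * t) ^ τ := one_le_rpow (by linarith) hτ
  have := rpow_nonneg (le_max_right (1 + t) 0) τ
  have := rpow_nonneg (le_max_right (1 - t) 0) τ
  rw [posPowSecondDiff, abs_le]
  constructor <;> linarith

section Integrability

variable {s τ : ℝ}

lemma integrableOn_Ioc_posPowSecondDiff_div_rpow (hs : s < 1) (hτ : τ ≤ 2) :
    IntegrableOn (fun t => posPowSecondDiff τ t / |t| ^ (1 + 2 * s)) (Ioc 0 (1 / 2)) := by
  set C := 2 * (|τ| * (|τ - 1| * (1 / 2) ^ (τ - 2)))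
  have hdom : IntegrableOn (fun t : ℝ => C * t ^ (1 - 2 * s)) (Ioc 0 (1 / 2)) :=
    ((intervalIntegrable_iff_integrableOn_Ioc_of_le (by norm_num)).mp
      (intervalIntegral.intervalIntegrable_rpow' (by linarith))).const_mul C
  refine hdom.mono' ((measurable_posPowSecondDiff τ).div (by fun_prop)).aestronglyMeasurable
    (ae_restrict_of_forall_mem measurableSet_Ioc fun t ht => ?_)
  have hpow : 0 < t ^ (1 + 2 * s) := rpow_pos_of_pos ht.1 _
  rw [norm_div, norm_eq_abs, norm_of_nonneg (by positivity), abs_of_pos ht.1,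
    div_le_iff₀ hpow, mul_assoc, ← rpow_add ht.1, show 1 - 2 * s + (1 + 2 * s) = 2 by ring,
    rpow_two]
  exact abs_posPowSecondDiff_le_of_le_half hτ ht.1.le ht.2

lemma integrableOn_Ioi_posPowSecondDiff_div_rpow (hτ₀ : 0 ≤ τ) (hτs : τ < 2 * s) :
    IntegrableOn (fun t => posPowSecondDiff τ t / |t| ^ (1 + 2 * s)) (Ioi (1 / 2)) := by
  have hdom : IntegrableOn (fun t : ℝ => 2 * 3 ^ τ * t ^ (τ - (1 + 2 * s))) (Ioi (1 / 2)) :=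
    (integrableOn_Ioi_rpow_of_lt (by linarith) (by norm_num)).const_mul _
  refine hdom.mono' ((measurable_posPowSecondDiff τ).div (by fun_prop)).aestronglyMeasurable
    (ae_restrict_of_forall_mem measurableSet_Ioi fun t ht => ?_)
  have ht₀ : (0 : ℝ) < t := by linarith [mem_Ioi.mp ht]
  have hpow : 0 < t ^ (1 + 2 * s) := rpow_pos_of_pos ht₀ _
  rw [norm_div, norm_eq_abs, norm_of_nonneg (by positivity), abs_of_pos ht₀,
    div_le_iff₀ hpow, mul_assoc, ← rpow_add ht₀, sub_add_cancel, mul_assoc,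
    ← mul_rpow (by norm_num) ht₀.le]
  exact abs_posPowSecondDiff_le_of_half_le hτ₀ (le_of_lt ht)

end Integrability

theorem stmt_0 (s τ : ℝ) (hs : s ∈ Set.Ioo (0:ℝ) 1) (hτ : τ ∈ Set.Ioo (0:ℝ) (2*s)) :
    Integrable (fun t : ℝ =>
      (2 - (max (1 + t) 0) ^ τ - (max (1 - t) 0) ^ τ) / |t| ^ (1 + 2*s)) := by
  change Integrable fun t => posPowSecondDiff τ t / |t| ^ (1 + 2 * s)
  refine integrable_of_even_of_integrableOn_Ioi (fun t => by rw [posPowSecondDiff_neg, abs_neg])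
    ?_
  rw [← Ioc_union_Ioi_eq_Ioi (by norm_num : (0 : ℝ) ≤ 1 / 2)]
  exact (integrableOn_Ioc_posPowSecondDiff_div_rpow hs.2 (by linarith [hs.2, hτ.2])).union
    (integrableOn_Ioi_posPowSecondDiff_div_rpow hτ.1.le hτ.2)
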